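/- For any ABox A_m that may contain variables and any TBox T, if A is the ABox returned by the procedure Rolling(A_m, T), then ⟨T, A_m⟩ ⊨ A, i.e., every model of ⟨T, A_m⟩ satisfies every assertion of A. -/

import Mathlib

set_option autoImplicit false

namespace ELBot


/-- EL⊥ concepts over natural-number concept names and role names. -/
inductive Concept : Type where
  | top : Concept
  | bot : Concept
  | atom : ℕ → Concept
  | conj : Concept → Concept → Concept
  | ex : ℕ → Concept → Concept
deriving DecidableEq

namespace Concept

/-- role depth -/
def rd : Concept → ℕ
  | top => 0
  | bot => 0
  | atom _ => 0
  | conj C D => max (rd C) (rd D)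
  | ex _ C => rd C + 1

def conceptNames : Concept → Set ℕ
  | top => ∅
  | bot => ∅
  | atom A => {A}
  | conj C D => conceptNames C ∪ conceptNames D
  | ex _ C => conceptNames C

def roleNames : Concept → Set ℕ
  | top => ∅
  | bot => ∅
  | atom _ => ∅
  | conj C D => roleNames C ∪ roleNames D
  | ex r C => insert r (roleNames C)

/-- the set of top-level conjuncts of a concept -/
def topConjuncts : Concept → Set Concept
  | conj C D => topConjuncts C ∪ topConjuncts D
  | C => {C}

end Concept

/-- ABox assertions over individual names of type `ι`. -/
inductive Assertion (ι : Type) : Type where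
  | concept : Concept → ι → Assertion ι
  | role : ℕ → ι → ι → Assertion ι

namespace Assertion
variable {ι κ : Type}

def conceptNames : Assertion ι → Set ℕ
  | concept C _ => C.conceptNames
  | role _ _ _ => ∅

def roleNames : Assertion ι → Set ℕ
  | concept C _ => C.roleNames
  | role r _ _ => {r}

def inds : Assertion ι → Set ι
  | concept _ a => {a}
  | role _ a b => {a, b}

def rdepth : Assertion ι → ℕ
  | concept C _ => C.rd
  | role _ _ _ => 0

def map (f : ι → κ) : Assertion ι → Assertion κ
  | concept C a => concept C (f a)
  | role r a b => role r (f a) (f b)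

end Assertion

abbrev GCI : Type := Concept × Concept
abbrev TBox : Type := Set GCI
abbrev ABox (ι : Type) : Type := Set (Assertion ι)

def TBox.conceptNames (T : TBox) : Set ℕ := ⋃ g ∈ T, g.1.conceptNames ∪ g.2.conceptNames
def TBox.roleNames (T : TBox) : Set ℕ := ⋃ g ∈ T, g.1.roleNames ∪ g.2.roleNames
/-- every concept occurring in `T` has role depth at most `k` -/
def TBox.DepthLE (T : TBox) (k : ℕ) : Prop := ∀ g ∈ T, g.1.rd ≤ k ∧ g.2.rd ≤ k

def ABox.conceptNames {ι : Type} (A : ABox ι) : Set ℕ := ⋃ α ∈ A, Assertion.conceptNames α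
def ABox.roleNames {ι : Type} (A : ABox ι) : Set ℕ := ⋃ α ∈ A, Assertion.roleNames α
def ABox.inds {ι : Type} (A : ABox ι) : Set ι := ⋃ α ∈ A, Assertion.inds α
def ABox.DepthLE {ι : Type} (A : ABox ι) (k : ℕ) : Prop := ∀ α ∈ A, Assertion.rdepth α ≤ k

/-- a knowledge base ⟨T, A⟩ -/
structure KB (ι : Type) : Type where
  tbox : TBox
  abox : ABox ι

def KB.conceptNames {ι : Type} (K : KB ι) : Set ℕ :=
  TBox.conceptNames K.tbox ∪ ABox.conceptNames K.abox
def KB.roleNames {ι : Type} (K : KB ι) : Set ℕ :=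
  TBox.roleNames K.tbox ∪ ABox.roleNames K.abox
def KB.inds {ι : Type} (K : KB ι) : Set ι := ABox.inds K.abox
def KB.DepthLE {ι : Type} (K : KB ι) (k : ℕ) : Prop :=
  TBox.DepthLE K.tbox k ∧ ABox.DepthLE K.abox k

/-- an interpretation -/
structure Interp (ι : Type) : Type 1 where
  Dom : Type
  nonempty : Nonempty Dom
  cI : ℕ → Set Dom
  rI : ℕ → Set (Dom × Dom)
  iI : ι → Dom

namespace Interp
variable {ι : Type}

def eval (I : Interp ι) : Concept → Set I.Dom
  | .top => Set.univ
  | .bot => ∅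
  | .atom A => I.cI A
  | .conj C D => I.eval C ∩ I.eval D
  | .ex r C => {x | ∃ y, (x, y) ∈ I.rI r ∧ y ∈ I.eval C}

def SatGCI (I : Interp ι) (g : GCI) : Prop := I.eval g.1 ⊆ I.eval g.2

def SatA (I : Interp ι) : Assertion ι → Prop
  | .concept C a => I.iI a ∈ I.eval C
  | .role r a b => (I.iI a, I.iI b) ∈ I.rI r

def Models (I : Interp ι) (K : KB ι) : Prop :=
  (∀ g ∈ K.tbox, I.SatGCI g) ∧ (∀ α ∈ K.abox, I.SatA α)

end Interp

def KB.Consistent {ι : Type} (K : KB ι) : Prop := ∃ I : Interp ι, I.Models K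
def KB.EntailsGCI {ι : Type} (K : KB ι) (g : GCI) : Prop :=
  ∀ I : Interp ι, I.Models K → I.SatGCI g
def KB.EntailsA {ι : Type} (K : KB ι) (α : Assertion ι) : Prop :=
  ∀ I : Interp ι, I.Models K → I.SatA α
def KB.EntailsABox {ι : Type} (K : KB ι) (A : ABox ι) : Prop := ∀ α ∈ A, K.EntailsA α
def KB.Equiv {ι : Type} (K K' : KB ι) : Prop := ∀ I : Interp ι, I.Models K ↔ I.Models K'


/-- nodes of a revision graph: individual names (`Sum.inl`) or variables (`Sum.inr`) -/
abbrev Node (ι : Type) : Type := ι ⊕ ℕ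

/-- a revision graph -/
structure RevGraph (ι : Type) : Type where
  V : Set (Node ι)
  E : Set (Node ι × Node ι)
  cl : Node ι → Set Concept
  rl : Node ι × Node ι → Set ℕ

namespace RevGraph
variable {ι : Type}

/-- well-formedness of a revision graph -/
def WF (G : RevGraph ι) : Prop :=
  G.V.Finite ∧
  (∀ e ∈ G.E, e.1 ∈ G.V ∧ e.2 ∈ G.V) ∧
  (∀ (v : ℕ) (a : ι), (Sum.inr v, Sum.inl a) ∉ G.E) ∧
  (∀ (v : ℕ) (x y : Node ι), (x, Sum.inr v) ∈ G.E → (y, Sum.inr v) ∈ G.E → x = y) ∧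
  (∀ (v : ℕ) (x : Node ι), (x, Sum.inr v) ∈ G.E → ∃ r : ℕ, G.rl (x, Sum.inr v) = {r}) ∧
  (∀ x, (G.cl x).Finite) ∧ (∀ e, (G.rl e).Finite)

/-- the level of a node -/
inductive HasLevel (G : RevGraph ι) : Node ι → ℕ → Prop where
  | ind (a : ι) : HasLevel G (Sum.inl a) 0
  | var (x : Node ι) (v : ℕ) (n : ℕ) :
      (x, Sum.inr v) ∈ G.E → HasLevel G x n → HasLevel G (Sum.inr v) (n + 1)

/-- the ABox representation of a revision graph -/
def aboxRep (G : RevGraph ι) : ABox (Node ι) :=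
  {α | ∃ x ∈ G.V, ∃ C ∈ G.cl x, α = Assertion.concept C x} ∪
  {α | ∃ e ∈ G.E, ∃ r ∈ G.rl e, α = Assertion.role r e.1 e.2}

def addConcepts (G : RevGraph ι) (x : Node ι) (S : Set Concept) : RevGraph ι :=
  { G with cl := fun y => G.cl y ∪ {C | y = x ∧ C ∈ S} }

def addVar (G : RevGraph ι) (x : Node ι) (z r : ℕ) (C : Concept) : RevGraph ι where
  V := insert (Sum.inr z) G.V
  E := insert (x, Sum.inr z) G.E
  cl := fun y => G.cl y ∪ {D | y = Sum.inr z ∧ D = C}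
  rl := fun e => G.rl e ∪ {s | e = (x, Sum.inr z) ∧ s = r}

/-- Step 3 of B-MW: keep only concept names in the node labels -/
def restrictToAtoms (G : RevGraph ι) : RevGraph ι :=
  { G with cl := fun x => {C ∈ G.cl x | ∃ A : ℕ, C = Concept.atom A} }

def Subgraph (B G : RevGraph ι) : Prop :=
  B.V ⊆ G.V ∧ B.E ⊆ G.E ∧ (∀ x, B.cl x ⊆ G.cl x) ∧ (∀ e, B.rl e ⊆ G.rl e) ∧
  (∀ x, x ∉ B.V → B.cl x = ∅) ∧ (∀ e, e ∉ B.E → B.rl e = ∅) ∧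
  (∀ e ∈ B.E, e.1 ∈ B.V ∧ e.2 ∈ B.V)

def IsTreeWithRoot (B : RevGraph ι) (x : Node ι) : Prop :=
  x ∈ B.V ∧
  (∀ y, (y, x) ∉ B.E) ∧
  (∀ e ∈ B.E, e.1 ∈ B.V ∧ e.2 ∈ B.V) ∧
  (∀ z ∈ B.V, Relation.ReflTransGen (fun u v => (u, v) ∈ B.E) x z) ∧
  (∀ z y₁ y₂, (y₁, z) ∈ B.E → (y₂, z) ∈ B.E → y₁ = y₂) ∧
  (∀ z, ¬ Relation.TransGen (fun u v => (u, v) ∈ B.E) z z)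

/-- branch `B₁` with root `x` is subsumed by branch `B₂` with the same root -/
def SubsumedBy (B₁ B₂ : RevGraph ι) (x : Node ι) : Prop :=
  B₁.IsTreeWithRoot x ∧ B₂.IsTreeWithRoot x ∧ B₁.V ∩ B₂.V = {x} ∧
  ∃ f : Node ι → Node ι, f x = x ∧
    (∀ y ∈ B₁.V, f y ∈ B₂.V) ∧
    (∀ y, B₁.cl y ⊆ B₂.cl (f y)) ∧
    (∀ e ∈ B₁.E, (f e.1, f e.2) ∈ B₂.E ∧ B₁.rl e ⊆ B₂.rl (f e.1, f e.2))

/-- `B` is a redundant branch of `G` with root `x` -/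
def RedundantBranchAt (G B : RevGraph ι) (x : Node ι) : Prop :=
  B.Subgraph G ∧ B.IsTreeWithRoot x ∧
  (∀ y ∈ B.V, y ≠ x → ∃ v : ℕ, y = Sum.inr v) ∧
  ∃ B₂ : RevGraph ι, B₂.Subgraph G ∧ B.SubsumedBy B₂ x

/-- remove the branch `B` (with root `x`) from `G` -/
def removeBranch (G B : RevGraph ι) (x : Node ι) : RevGraph ι where
  V := G.V \ (B.V \ {x})
  E := G.E \ B.E
  cl := fun y => {C ∈ G.cl y | y ∉ B.V \ {x}}
  rl := fun e => {r ∈ G.rl e | e ∉ B.E}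

end RevGraph

/-- Step 1 of B-MW: the initial revision graph of a KB -/
def initGraph {ι : Type} (K : KB ι) : RevGraph ι where
  V := Sum.inl '' KB.inds K
  E := {e | ∃ a b r, e = (Sum.inl a, Sum.inl b) ∧ Assertion.role r a b ∈ K.abox}
  cl := fun x => {C | ∃ a, x = Sum.inl a ∧ Assertion.concept C a ∈ K.abox}
  rl := fun e => {r | ∃ a b, e = (Sum.inl a, Sum.inl b) ∧ Assertion.role r a b ∈ K.abox}

/-- one application of an expansion rule of Step 2 of B-MW(K, k) -/
inductive Step2 {ι : Type} (K : KB ι) (k : ℕ) : RevGraph ι → RevGraph ι → Prop where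
  | gciI (G : RevGraph ι) (a : ι) (C D : Concept) :
      Sum.inl a ∈ G.V → (C, D) ∈ K.tbox → D ∉ G.cl (Sum.inl a) →
      KB.EntailsA K (Assertion.concept C a) →
      Step2 K k G (G.addConcepts (Sum.inl a) {D})
  | gciV (G : RevGraph ι) (v : ℕ) (C D : Concept) :
      Sum.inr v ∈ G.V → (C, D) ∈ K.tbox → D ∉ G.cl (Sum.inr v) →
      KB.EntailsA
        (KB.mk K.tbox
          {α : Assertion (Node ι) | ∃ E ∈ G.cl (Sum.inr v), α = Assertion.concept E (Sum.inr v)})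
        (Assertion.concept C (Sum.inr v)) →
      Step2 K k G (G.addConcepts (Sum.inr v) {D})
  | conj (G : RevGraph ι) (x : Node ι) (C₁ C₂ : Concept) :
      x ∈ G.V → Concept.conj C₁ C₂ ∈ G.cl x → ¬ ({C₁, C₂} ⊆ G.cl x) →
      Step2 K k G (G.addConcepts x {C₁, C₂})
  | ex (G : RevGraph ι) (x : Node ι) (r : ℕ) (C : Concept) (z : ℕ) (n : ℕ) :
      x ∈ G.V → Concept.ex r C ∈ G.cl x →
      (∀ y, (x, y) ∈ G.E → C ∉ G.cl y) →
      RevGraph.HasLevel G x n → n ≤ k →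
      Sum.inr z ∉ G.V →
      Step2 K k G (G.addVar x z r C)

/-- `G` is the result of exhaustively applying the expansion rules of Step 2 of B-MW(K, k) -/
def Step2Closure {ι : Type} (K : KB ι) (k : ℕ) (G : RevGraph ι) : Prop :=
  Relation.ReflTransGen (Step2 K k) (initGraph K) G ∧ ∀ G', ¬ Step2 K k G G'

/-- one deletion of a redundant branch (Step 4 of B-MW) -/
inductive Step4 {ι : Type} : RevGraph ι → RevGraph ι → Prop where
  | rem (G B : RevGraph ι) (x : Node ι) :
      RevGraph.RedundantBranchAt G B x → Step4 G (G.removeBranch B x)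

/-- `G` is a revision graph returned by the procedure B-MW(K, k) -/
def IsBMW {ι : Type} (K : KB ι) (k : ℕ) (G : RevGraph ι) : Prop :=
  ∃ G₂ : RevGraph ι, Step2Closure K k G₂ ∧
    Relation.ReflTransGen Step4 (RevGraph.restrictToAtoms G₂) G ∧ (∀ G', ¬ Step4 G G')

/-- `C` is a conjunction of the concepts in `S` (⊤ if `S` is empty) -/
inductive IsConjOf : Concept → Set Concept → Prop where
  | empty : IsConjOf Concept.top ∅
  | single (C : Concept) : IsConjOf C {C}
  | conj (C D : Concept) (S S' : Set Concept) :
      IsConjOf C S → IsConjOf D S' → IsConjOf (Concept.conj C D) (S ∪ S')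

/-- the revision-graph representation of an ABox (possibly containing variables) -/
def graphOfABox {ι : Type} (A : ABox (Node ι)) : RevGraph ι where
  V := ABox.inds A
  E := {e | ∃ r, Assertion.role r e.1 e.2 ∈ A}
  cl := fun x => {C | Assertion.concept C x ∈ A}
  rl := fun e => {r | Assertion.role r e.1 e.2 ∈ A}

/-- `x` is a descendant of some individual name in `G` -/
def RevGraph.indReachable {ι : Type} (G : RevGraph ι) (x : Node ι) : Prop :=
  ∃ a : ι, Relation.TransGen (fun u v => (u, v) ∈ G.E) (Sum.inl a) x

/-- restrict a revision graph to a set of nodes -/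
def RevGraph.restrictNodes {ι : Type} (G : RevGraph ι) (S : Set (Node ι)) : RevGraph ι where
  V := G.V ∩ S
  E := {e ∈ G.E | e.1 ∈ S ∧ e.2 ∈ S}
  cl := fun x => {C ∈ G.cl x | x ∈ S}
  rl := fun e => {r ∈ G.rl e | e.1 ∈ S ∧ e.2 ∈ S}

/-- the KB ⟨T, {D(x) | D ∈ L(x)}⟩ -/
def labelKB {ι : Type} (T : TBox) (G : RevGraph ι) (x : Node ι) : KB (Node ι) :=
  KB.mk T {α : Assertion (Node ι) | ∃ D ∈ G.cl x, α = Assertion.concept D x}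

/-- roll up the leaf variable `y` (with predecessor `x`, edge label `r`, label conjunction `Cy`) -/
def rollUpOnce {ι : Type} (T : TBox) (G : RevGraph ι) (x : Node ι) (y r : ℕ) (Cy : Concept) :
    RevGraph ι where
  V := G.V \ {Sum.inr y}
  E := G.E \ {(x, Sum.inr y)}
  cl := fun z =>
    {C ∈ G.cl z | z ≠ Sum.inr y} ∪
    {C | z = x ∧ C = Concept.ex r Cy ∧
      ¬ KB.EntailsA (labelKB T G x) (Assertion.concept (Concept.ex r Cy) x)}
  rl := fun e => {s ∈ G.rl e | e ≠ (x, Sum.inr y)}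

/-- one iteration of the while-loop of the procedure Rolling -/
inductive RollStep {ι : Type} (T : TBox) : RevGraph ι → RevGraph ι → Prop where
  | step (G : RevGraph ι) (y : ℕ) (x : Node ι) (r : ℕ) (Cy : Concept) :
      Sum.inr y ∈ G.V → (∀ z, (Sum.inr y, z) ∉ G.E) → (x, Sum.inr y) ∈ G.E →
      G.rl (x, Sum.inr y) = {r} →
      IsConjOf Cy (G.cl (Sum.inr y)) →
      RollStep T G (rollUpOnce T G x y r Cy)

/-- `A` is an ABox returned by the procedure Rolling(Am, T) -/
def IsRolling {ι : Type} (T : TBox) (Am : ABox (Node ι)) (A : ABox ι) : Prop :=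
  ∃ Gf : RevGraph ι,
    Relation.ReflTransGen (RollStep T)
      (RevGraph.restrictNodes (graphOfABox Am)
        {x | (∃ a : ι, x = Sum.inl a) ∨ RevGraph.indReachable (graphOfABox Am) x})
      Gf ∧
    (∀ v : ℕ, Sum.inr v ∉ Gf.V) ∧
    Assertion.map Sum.inl '' A = RevGraph.aboxRep Gf

/-- `J` is an (A, N)-justification for a clash w.r.t. `T` -/
def IsJustification {ι : Type} (T : TBox) (A N : ABox ι) (J : ABox ι) : Prop :=
  J ⊆ A ∧ KB.EntailsGCI (KB.mk T (J ∪ N)) (Concept.top, Concept.bot) ∧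
  ∀ J' : ABox ι, J' ⊂ J → ¬ KB.EntailsGCI (KB.mk T (J' ∪ N)) (Concept.top, Concept.bot)

/-- `R` is an (A, N)-repair for clashes w.r.t. `T` -/
def IsRepair {ι : Type} (T : TBox) (A N : ABox ι) (R : ABox ι) : Prop :=
  R ⊆ A ∧ ∀ J : ABox ι, IsJustification T A N J → ∃ α, R ∩ J = {α}

/-- `(A'', R)` is one of the pairs returned by Adaptation((T, A, N), k) -/
def AdaptationPair {ι : Type} (T : TBox) (A N : ABox ι) (k : ℕ)
    (A'' : ABox ι) (R : ABox (Node ι)) : Prop :=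
  (KB.Consistent (KB.mk T (A ∪ N)) ∧ A'' = A ∪ N ∧ R = ∅) ∨
  (¬ KB.Consistent (KB.mk T (A ∪ N)) ∧
    ∃ G : RevGraph ι, IsBMW (KB.mk T A) k G ∧
      IsRepair T (RevGraph.aboxRep G) (Assertion.map Sum.inl '' N) R ∧
      ∃ A' : ABox ι, IsRolling T (RevGraph.aboxRep G \ R) A' ∧ A'' = A' ∪ N)

/-- the rolled-up concept Roll(y) of a node of a tree-shaped revision graph -/
inductive IsRollConcept {ι : Type} (G : RevGraph ι) : Node ι → Concept → Prop where
  | leaf (y : Node ι) (D : Concept) :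
      (∀ z, (y, z) ∉ G.E) → IsConjOf D (G.cl y) →
      IsRollConcept G y D
  | node (y : Node ι) (succs : List (Node ι × ℕ × Concept)) (D : Concept) :
      succs ≠ [] →
      (∀ z, ((y, z) ∈ G.E ↔ ∃ p ∈ succs, p.1 = z)) →
      (∀ p ∈ succs, G.rl (y, p.1) = {p.2.1}) →
      (∀ p ∈ succs, IsRollConcept G p.1 p.2.2) →
      IsConjOf D
        ((fun p : Node ι × ℕ × Concept => Concept.ex p.2.1 p.2.2) '' {p | p ∈ succs} ∪ G.cl y) →
      IsRollConcept G y D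

/-! Each iteration of Rolling deletes assertions about a leaf variable `y` with predecessor `x`
and at most adds `∃R.C_y(x)`; in any interpretation satisfying the current ABox this new
assertion is witnessed by the image of `y`. So satisfaction of the ABox representation is
invariant along the loop, and the initial graph only contains assertions of `Am`. -/

section Rolling

variable {ι : Type}

theorem IsConjOf.mem_eval (I : Interp ι) {d : I.Dom} {C : Concept} {S : Set Concept}
    (hC : IsConjOf C S) (hS : ∀ D ∈ S, d ∈ I.eval D) : d ∈ I.eval C := by
  induction hC with
  | empty => trivial
  | single C => exact hS C rfl
  | conj C D S S' _ _ ihC ihD =>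
      exact ⟨ihC fun E hE => hS E (Or.inl hE), ihD fun E hE => hS E (Or.inr hE)⟩

theorem RevGraph.aboxRep_restrictNodes_subset (G : RevGraph ι) (S : Set (Node ι)) :
    (G.restrictNodes S).aboxRep ⊆ G.aboxRep := by
  rintro _ (⟨x, hx, C, hC, rfl⟩ | ⟨e, he, r, hr, rfl⟩)
  · exact Or.inl ⟨x, hx.1, C, hC.1, rfl⟩
  · exact Or.inr ⟨e, he.1, r, hr.1, rfl⟩

theorem aboxRep_graphOfABox_subset (A : ABox (Node ι)) : (graphOfABox A).aboxRep ⊆ A := by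
  rintro _ (⟨x, -, C, hC, rfl⟩ | ⟨e, -, r, hr, rfl⟩)
  · exact hC
  · exact hr

theorem RollStep.satA_aboxRep {T : TBox} {I : Interp (Node ι)} {G G' : RevGraph ι}
    (hstep : RollStep T G G') (hG : ∀ α ∈ G.aboxRep, I.SatA α) :
    ∀ α ∈ G'.aboxRep, I.SatA α := by
  obtain ⟨y, x, r, Cy, hyV, -, hxy, hrl, hCy⟩ := hstep
  rintro _ (⟨z, hz, C, hC | ⟨rfl, rfl, -⟩, rfl⟩ | ⟨e, he, s, hs, rfl⟩)
  · exact hG _ (Or.inl ⟨z, hz.1, C, hC.1, rfl⟩)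
  · have hrole : I.SatA (.role r z (Sum.inr y)) :=
      hG _ (Or.inr ⟨(z, Sum.inr y), hxy, r, by rw [hrl]; rfl, rfl⟩)
    have hlabel : I.SatA (.concept Cy (Sum.inr y)) :=
      hCy.mem_eval I fun D hD => hG _ (Or.inl ⟨Sum.inr y, hyV, D, hD, rfl⟩)
    exact ⟨I.iI (Sum.inr y), hrole, hlabel⟩
  · exact hG _ (Or.inr ⟨e, he.1, s, hs.1, rfl⟩)

theorem RollStep.reflTransGen_satA_aboxRep {T : TBox} {I : Interp (Node ι)}
    {G G' : RevGraph ι} (hsteps : Relation.ReflTransGen (RollStep T) G G')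
    (hG : ∀ α ∈ G.aboxRep, I.SatA α) : ∀ α ∈ G'.aboxRep, I.SatA α := by
  induction hsteps with
  | refl => exact hG
  | tail _ hstep ih => exact hstep.satA_aboxRep ih

end Rolling

theorem rolling_entailed_general {ι : Type} (T : TBox) (Am : ABox (Node ι)) (A : ABox ι)
    (hroll : IsRolling T Am A) :
    KB.EntailsABox (KB.mk T Am) (Assertion.map Sum.inl '' A) := by
  obtain ⟨Gf, hsteps, -, hA⟩ := hroll
  intro α hα I hI
  rw [hA] at hα
  refine RollStep.reflTransGen_satA_aboxRep hsteps (fun β hβ => hI.2 β ?_) α hα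
  exact aboxRep_graphOfABox_subset Am (RevGraph.aboxRep_restrictNodes_subset _ _ hβ)

/-- Lemma 3: if `A` is the ABox returned by Rolling(Am, T), then ⟨T, Am⟩ ⊨ A. -/
theorem rolling_entailed {ι : Type} (T : TBox) (Am : ABox (Node ι)) (A : ABox ι)
    (hTfin : T.Finite) (hAmfin : Am.Finite)
    (hroll : IsRolling T Am A) :
    KB.EntailsABox (KB.mk T Am) (Assertion.map Sum.inl '' A) :=
  rolling_entailed_general T Am A hroll

end ELBot
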